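/- Let T be a finite connected multigraph with signed edges and e a positive edge lying in no all-positive cycle. If T' is obtained by flipping e to negative, then the maximum of η over spanning trees decreases by exactly 2: max_{t ⊆ T'} η'(t) = max_{t ⊆ T} η(t) − 2. -/

import Mathlib

/-- A finite multigraph: vertex type `V`, edge type `E`, each edge has an
unordered pair of endpoints (loops and parallel edges are allowed). -/
structure Multigraph where
  V : Type
  E : Type
  fV : Fintype V
  fE : Fintype E
  dV : DecidableEq V
  dE : DecidableEq E
  ends : E → Sym2 V

attribute [instance] Multigraph.fV Multigraph.fE Multigraph.dV Multigraph.dE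

namespace Multigraph

variable (G : Multigraph)

/-- `u` and `v` are joined by an edge of the edge set `S`. -/
def adjOn (S : Finset G.E) (u v : G.V) : Prop :=
  ∃ e ∈ S, G.ends e = s(u, v)

/-- `u` and `v` are joined by a walk using only edges of `S`. -/
def reach (S : Finset G.E) (u v : G.V) : Prop :=
  Relation.ReflTransGen (G.adjOn S) u v

/-- The spanning subgraph with edge set `S` is connected. -/
def connectedOn (S : Finset G.E) : Prop := ∀ u v : G.V, G.reach S u v

/-- The multigraph is connected. -/
def Connected : Prop := Nonempty G.V ∧ G.connectedOn Finset.univ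

/-- The subgraph with edge set `S` contains no cycle: no edge of `S` has its
endpoints joined within `S` minus that edge. -/
def acyclicOn (S : Finset G.E) : Prop :=
  ∀ e ∈ S, ∀ u v : G.V, G.ends e = s(u, v) → ¬ G.reach (S.erase e) u v

/-- `S` is the edge set of a spanning tree: connected and acyclic spanning
subgraph. -/
def IsSpanningTree (S : Finset G.E) : Prop :=
  G.connectedOn S ∧ G.acyclicOn S

/-- the edge `e` lies in a cycle all of whose edges belong to `S`. -/
def InCycleOn (S : Finset G.E) (e : G.E) : Prop :=
  e ∈ S ∧ ∃ u v : G.V, G.ends e = s(u, v) ∧ G.reach (S.erase e) u v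

/-- the positive edges, for a sign labelling (`true` = positive). -/
def posEdges (sign : G.E → Bool) : Finset G.E :=
  Finset.univ.filter fun e => sign e = true

/-- the negative edges. -/
def negEdges (sign : G.E → Bool) : Finset G.E :=
  Finset.univ.filter fun e => sign e = false

/-- `e` lies in a cycle consisting entirely of positive edges. -/
def InPositiveCycle (sign : G.E → Bool) (e : G.E) : Prop :=
  G.InCycleOn (G.posEdges sign) e

/-- `e` lies in a cycle consisting entirely of negative edges. -/
def InNegativeCycle (sign : G.E → Bool) (e : G.E) : Prop :=
  G.InCycleOn (G.negEdges sign) e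

/-- `η(t)` = (# positive edges of `t`) − (# negative edges of `t`). -/
def eta (sign : G.E → Bool) (t : Finset G.E) : ℤ :=
  ((t.filter fun e => sign e = true).card : ℤ) -
    (t.filter fun e => sign e = false).card

/-- `S` contains a cycle. -/
def Dependent (S : Finset G.E) : Prop := ¬ G.acyclicOn S

/-- `C` is (the edge set of) a cycle: a minimal dependent set. -/
def IsCircuit (C : Finset G.E) : Prop :=
  G.Dependent C ∧ ∀ C' ⊂ C, G.acyclicOn C'

/-- the set of values of `η` on spanning trees. -/
def etaSet (sign : G.E → Bool) : Set ℤ :=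
  {x | ∃ t : Finset G.E, G.IsSpanningTree t ∧ G.eta sign t = x}

/-!
A spanning tree `t` avoiding `e = uv` can always be improved: the path from `u` to `v` in `t`
closes a cycle with `e`, so it cannot be all-positive, and exchanging one of its negative edges
for `e` gives a spanning tree with `η` larger by 2. Hence every `η`-maximizing tree contains `e`.
Flipping `e` lowers `η` by 2 on trees containing `e` and leaves it unchanged on the others, whose
`η` was already at most `max η - 2`.
-/

variable {G}

section Reach

variable {S T : Finset G.E} {f : G.E} {u v x y : G.V}

lemma adjOn_symm (h : G.adjOn S u v) : G.adjOn S v u :=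
  let ⟨g, hg, hends⟩ := h
  ⟨g, hg, hends.trans Sym2.eq_swap⟩

lemma reach_symm (h : G.reach S u v) : G.reach S v u := by
  induction h with
  | refl => exact .refl
  | tail _ hxy ih => exact .head (adjOn_symm hxy) ih

lemma reach_mono (hST : S ⊆ T) (h : G.reach S u v) : G.reach T u v :=
  Relation.ReflTransGen.mono (fun _ _ ⟨g, hg, hge⟩ ↦ ⟨g, hST hg, hge⟩) _ _ h

lemma reach_of_mem (hf : f ∈ S) (huv : G.ends f = s(u, v)) : G.reach S u v :=
  .single ⟨f, hf, huv⟩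

lemma reach_of_sym2_eq (h : s(u, v) = s(x, y)) (huv : G.reach S u v) : G.reach S x y := by
  rcases Sym2.eq_iff.mp h with ⟨rfl, rfl⟩ | ⟨rfl, rfl⟩
  exacts [huv, reach_symm huv]

lemma exists_reach_erase_of_not_reach_erase (h : G.reach S u v)
    (hf : ¬ G.reach (S.erase f) u v) :
    ∃ a b, G.ends f = s(a, b) ∧ G.reach (S.erase f) u a ∧ G.reach (S.erase f) b v := by
  induction h using Relation.ReflTransGen.head_induction_on with
  | refl => exact absurd .refl hf
  | @head w x hwx hxv ih =>
    obtain ⟨g, hg, hge⟩ := hwx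
    by_cases hxv' : G.reach (S.erase f) x v
    · obtain rfl : g = f := by
        by_contra hgf
        exact hf (.head ⟨g, Finset.mem_erase.mpr ⟨hgf, hg⟩, hge⟩ hxv')
      exact ⟨w, x, hge, .refl, hxv'⟩
    · obtain ⟨a, b, hab, hxa, hbv⟩ := ih hxv'
      by_cases hgf : g = f
      · subst hgf
        rcases Sym2.eq_iff.mp (hge.symm.trans hab) with ⟨rfl, rfl⟩ | ⟨rfl, rfl⟩
        · exact absurd ((reach_symm hxa).trans hbv) hf
        · exact absurd hbv hf
      · exact ⟨a, b, hab, .head ⟨g, Finset.mem_erase.mpr ⟨hgf, hg⟩, hge⟩ hxa, hbv⟩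

end Reach

section Forest

variable {S t : Finset G.E} {e f : G.E} {u v : G.V}

open Classical in
lemma exists_minimal_reach (h : G.reach S u v) :
    ∃ P ⊆ S, G.reach P u v ∧ ∀ f ∈ P, ¬ G.reach (P.erase f) u v := by
  obtain ⟨P, hP, hmin⟩ := Finset.exists_min_image {P ∈ S.powerset | G.reach P u v} Finset.card
    ⟨S, by simpa using h⟩
  rw [Finset.mem_filter, Finset.mem_powerset] at hP
  refine ⟨P, hP.1, hP.2, fun f hf hPf ↦ ?_⟩
  have := hmin (P.erase f) (by simpa using ⟨(Finset.erase_subset f P).trans hP.1, hPf⟩)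
  exact this.not_gt (Finset.card_erase_lt_of_mem hf)

lemma exists_bridge_notMem (ht : G.acyclicOn t) (h : G.reach t u v) (hS : ¬ G.reach S u v) :
    ∃ f ∈ t, f ∉ S ∧ ¬ G.reach (t.erase f) u v := by
  obtain ⟨P, hPt, hP, hmin⟩ := exists_minimal_reach h
  obtain ⟨f, hfP, hfS⟩ : ∃ f ∈ P, f ∉ S := by
    by_contra! hPS
    exact hS (reach_mono hPS hP)
  refine ⟨f, hPt hfP, hfS, fun hf ↦ ?_⟩
  obtain ⟨a, b, hab, hua, hbv⟩ := exists_reach_erase_of_not_reach_erase hP (hmin f hfP)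
  have hPt' : P.erase f ⊆ t.erase f := Finset.erase_subset_erase f hPt
  exact ht f (hPt hfP) a b hab
    (((reach_symm (reach_mono hPt' hua)).trans hf).trans (reach_symm (reach_mono hPt' hbv)))

lemma connectedOn_insert_erase (ht : G.connectedOn t) (he : G.ends e = s(u, v))
    (hsep : ¬ G.reach (t.erase f) u v) : G.connectedOn (insert e (t.erase f)) := by
  obtain ⟨a, b, hab, hua, hbv⟩ := exists_reach_erase_of_not_reach_erase (ht u v) hsep
  have hsub : t.erase f ⊆ insert e (t.erase f) := Finset.subset_insert e _
  have hreach_ab : G.reach (insert e (t.erase f)) a b :=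
    ((reach_mono hsub (reach_symm hua)).trans (reach_of_mem (Finset.mem_insert_self e _) he)).trans
      (reach_mono hsub (reach_symm hbv))
  refine fun x y ↦ Relation.ReflTransGen.lift' id (fun x y ⟨g, hg, hgxy⟩ ↦ ?_) x y (ht x y)
  by_cases hgf : g = f
  · subst hgf
    exact reach_of_sym2_eq (hab.symm.trans hgxy) hreach_ab
  · exact reach_of_mem (hsub (Finset.mem_erase.mpr ⟨hgf, hg⟩)) hgxy

lemma acyclicOn_insert_erase (ht : G.acyclicOn t) (he : G.ends e = s(u, v)) (het : e ∉ t)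
    (hsep : ¬ G.reach (t.erase f) u v) : G.acyclicOn (insert e (t.erase f)) := by
  have hef : e ∉ t.erase f := fun h ↦ het (Finset.mem_of_mem_erase h)
  intro g hg x y hgxy hxy
  rcases Finset.mem_insert.mp hg with rfl | hg
  · rw [Finset.erase_insert hef] at hxy
    exact hsep (reach_of_sym2_eq (hgxy.symm.trans he) hxy)
  have hge : e ≠ g := fun h ↦ hef (h ▸ hg)
  rw [Finset.erase_insert_of_ne hge] at hxy
  set Q := (t.erase f).erase g
  have heQ : e ∉ Q := fun h ↦ hef (Finset.mem_of_mem_erase h)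
  by_cases hQxy : G.reach Q x y
  · exact ht g (Finset.mem_of_mem_erase hg) x y hgxy
      (reach_mono (Finset.erase_subset_erase g (Finset.erase_subset f t)) hQxy)
  obtain ⟨a, b, hab, hxa, hby⟩ :=
    exists_reach_erase_of_not_reach_erase hxy (by rwa [Finset.erase_insert heQ])
  rw [Finset.erase_insert heQ] at hxa hby
  have hQf : Q ⊆ t.erase f := Finset.erase_subset g _
  exact hsep <| reach_of_sym2_eq (hab.symm.trans he) <|
    ((reach_symm (reach_mono hQf hxa)).trans (reach_of_mem hg hgxy)).trans
      (reach_symm (reach_mono hQf hby))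

lemma IsSpanningTree.insert_erase (ht : G.IsSpanningTree t) (he : G.ends e = s(u, v))
    (het : e ∉ t) (hsep : ¬ G.reach (t.erase f) u v) :
    G.IsSpanningTree (insert e (t.erase f)) :=
  ⟨connectedOn_insert_erase ht.1 he hsep, acyclicOn_insert_erase ht.2 he het hsep⟩

end Forest

section Eta

variable (sign : G.E → Bool) {t : Finset G.E} {e f : G.E}

lemma eta_eq_sum (t : Finset G.E) : G.eta sign t = ∑ g ∈ t, if sign g then 1 else -1 := by
  simp [Finset.sum_ite, eta, sub_eq_add_neg]

lemma eta_insert_erase (het : e ∉ t) (hf : f ∈ t) (he : sign e = true) (hf' : sign f = false) :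
    G.eta sign (insert e (t.erase f)) = G.eta sign t + 2 := by
  rw [eta_eq_sum, eta_eq_sum, Finset.sum_insert (fun h ↦ het (Finset.mem_of_mem_erase h)),
    Finset.sum_erase_eq_sub hf, he, hf']
  simp only [if_true, Bool.false_eq_true, if_false]
  ring

lemma eta_update_of_mem (het : e ∈ t) (he : sign e = true) :
    G.eta (Function.update sign e false) t = G.eta sign t - 2 := by
  rw [eta_eq_sum, eta_eq_sum, ← Finset.add_sum_erase t _ het, ← Finset.add_sum_erase t _ het,
    Finset.sum_congr rfl fun g hg ↦ by rw [Function.update_of_ne (Finset.ne_of_mem_erase hg)]]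
  simp only [Function.update_self, Bool.false_eq_true, if_false, he, if_true]
  ring

lemma eta_update_of_notMem (het : e ∉ t) :
    G.eta (Function.update sign e false) t = G.eta sign t := by
  simp only [eta_eq_sum]
  exact Finset.sum_congr rfl fun g hg ↦ by
    rw [Function.update_of_ne (ne_of_mem_of_not_mem hg het)]

end Eta

section Flip

variable {sign : G.E → Bool} {e : G.E}

lemma exists_isSpanningTree_eta_eq_add_two (he : sign e = true)
    (hnc : ¬ G.InPositiveCycle sign e) {t : Finset G.E} (ht : G.IsSpanningTree t) (het : e ∉ t) :
    ∃ t', G.IsSpanningTree t' ∧ G.eta sign t' = G.eta sign t + 2 := by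
  obtain ⟨u, v, huv⟩ : ∃ u v, G.ends e = s(u, v) := Sym2.exists.mp ⟨_, rfl⟩
  have hsub : {g ∈ t | sign g = true} ⊆ (G.posEdges sign).erase e := fun g hg ↦ by
    rw [Finset.mem_filter] at hg
    simp [posEdges, hg.2, ne_of_mem_of_not_mem hg.1 het]
  have hpos : ¬ G.reach {g ∈ t | sign g = true} u v := fun h ↦
    hnc ⟨by simp [posEdges, he], u, v, huv, reach_mono hsub h⟩
  obtain ⟨f, hf, hfpos, hsep⟩ := exists_bridge_notMem ht.2 (ht.1 u v) hpos
  have hf' : sign f = false := by simpa [hf] using hfpos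
  exact ⟨_, ht.insert_erase huv het hsep, eta_insert_erase sign het hf he hf'⟩

lemma eta_add_two_le_of_isGreatest (he : sign e = true) (hnc : ¬ G.InPositiveCycle sign e)
    {M : ℤ} (hM : IsGreatest (G.etaSet sign) M) {t : Finset G.E} (ht : G.IsSpanningTree t)
    (het : e ∉ t) : G.eta sign t + 2 ≤ M := by
  obtain ⟨t', ht', heta⟩ := exists_isSpanningTree_eta_eq_add_two he hnc ht het
  exact heta ▸ hM.2 ⟨t', ht', rfl⟩

lemma eta_update_le_of_isGreatest (he : sign e = true) (hnc : ¬ G.InPositiveCycle sign e)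
    {M : ℤ} (hM : IsGreatest (G.etaSet sign) M) {t : Finset G.E} (ht : G.IsSpanningTree t) :
    G.eta (Function.update sign e false) t ≤ M - 2 := by
  by_cases het : e ∈ t
  · rw [eta_update_of_mem sign het he]
    linarith [hM.2 ⟨t, ht, rfl⟩]
  · rw [eta_update_of_notMem sign het]
    linarith [eta_add_two_le_of_isGreatest he hnc hM ht het]

lemma mem_of_isGreatest (he : sign e = true) (hnc : ¬ G.InPositiveCycle sign e)
    {M : ℤ} (hM : IsGreatest (G.etaSet sign) M) {t : Finset G.E} (ht : G.IsSpanningTree t)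
    (htM : G.eta sign t = M) : e ∈ t := by
  by_contra het
  linarith [eta_add_two_le_of_isGreatest he hnc hM ht het]

end Flip

end Multigraph

theorem stmt7_general (G : Multigraph) (sign : G.E → Bool)
    (e : G.E) (he : sign e = true) (hnc : ¬ G.InPositiveCycle sign e)
    (M M' : ℤ)
    (hM : IsGreatest (G.etaSet sign) M)
    (hM' : IsGreatest (G.etaSet (Function.update sign e false)) M') :
    M' = M - 2 := by
  obtain ⟨t', ht', rfl⟩ := hM'.1
  obtain ⟨t, ht, rfl⟩ := hM.1
  have het : e ∈ t := Multigraph.mem_of_isGreatest he hnc hM ht rfl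
  refine le_antisymm (Multigraph.eta_update_le_of_isGreatest he hnc hM ht') ?_
  rw [← Multigraph.eta_update_of_mem sign het he]
  exact hM'.2 ⟨t, ht, rfl⟩

/-- flipping to negative a positive edge that lies in no
all-positive cycle decreases the maximum of `η` over spanning trees by 2. -/
theorem stmt7 (G : Multigraph) (hconn : G.Connected) (sign : G.E → Bool)
    (e : G.E) (he : sign e = true) (hnc : ¬ G.InPositiveCycle sign e)
    (M M' : ℤ)
    (hM : IsGreatest (G.etaSet sign) M)
    (hM' : IsGreatest (G.etaSet (Function.update sign e false)) M') :
    M' = M - 2 :=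
  stmt7_general G sign e he hnc M M' hM hM'
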